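/- For F ∈ GL(3,ℝ) with polar decomposition F = RD, the map (t', R') ↦ ∫_{B_ρ(0)} |F·h − R'·h − t'|² dh over ℝ³ × SO(3) decomposes as (4πρ³/3)|t'|² + (4πρ⁵/15)(‖D‖_F² + 3 − 2·trace(DᵀR̃)) where R̃ = RᵀR'. -/

import Mathlib

/-! Write `Z = F - R'`. The integrand is `‖Z h‖² - 2⟪Z h, t'⟫ + ‖t'‖²`; the cross term is odd in
`h`, so it integrates to zero over the ball. Reflecting one coordinate and permuting coordinates
are isometries preserving the ball, so the second moments `∫ hⱼ hₖ` vanish for `j ≠ k` and all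
equal `(1/3) ∫ ‖h‖² = 4πρ⁵/15` for `j = k`; hence the quadratic term is `(4πρ⁵/15) ‖Z‖_F²`.
Finally `‖R D - R'‖_F² = ‖D‖_F² + 3 - 2 tr(Dᵀ Rᵀ R')` because `R` and `R'` are orthogonal. -/

open Matrix MeasureTheory

noncomputable def frob {n : ℕ} (A : Matrix (Fin n) (Fin n) ℝ) : ℝ :=
  Real.sqrt ((Aᵀ * A).trace)

noncomputable def mv (Z : Matrix (Fin 3) (Fin 3) ℝ) (h : EuclideanSpace ℝ (Fin 3)) :
    EuclideanSpace ℝ (Fin 3) :=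
  (EuclideanSpace.equiv (Fin 3) ℝ).symm (Z.mulVec (EuclideanSpace.equiv (Fin 3) ℝ h))

open Metric Set WithLp

theorem Continuous.integrableOn_ball {X : Type*} [MetricSpace X] [ProperSpace X]
    [MeasurableSpace X] [OpensMeasurableSpace X] {μ : Measure X} [IsFiniteMeasureOnCompacts μ]
    {f : X → ℝ} (hf : Continuous f) (x : X) (ρ : ℝ) : IntegrableOn f (ball x ρ) μ :=
  (hf.continuousOn.integrableOn_compact (isCompact_closedBall x ρ)).mono_set
    ball_subset_closedBall

section NormMoment

variable {E : Type*} [NormedAddCommGroup E] [NormedSpace ℝ E] [Nontrivial E]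
  [FiniteDimensional ℝ E] [MeasurableSpace E] [BorelSpace E]

theorem setIntegral_ball_norm_pow (μ : Measure E) [μ.IsAddHaarMeasure] (n : ℕ) {ρ : ℝ}
    (hρ : 0 ≤ ρ) :
    ∫ x in ball 0 ρ, ‖x‖ ^ n ∂μ =
      Module.finrank ℝ E / (Module.finrank ℝ E + n) * ρ ^ (Module.finrank ℝ E + n) *
        μ.real (ball 0 1) := by
  set d := Module.finrank ℝ E
  have hd : 0 < d := Module.finrank_pos
  have hradial : ∫ x in ball 0 ρ, ‖x‖ ^ n ∂μ =
      ∫ x, (Iio ρ).indicator (fun r => r ^ n) ‖x‖ ∂μ := by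
    rw [← integral_indicator measurableSet_ball]
    congr 1 with x
    simp only [indicator, mem_ball_zero_iff, mem_Iio]
  have hshell : ∫ y in Ioi (0 : ℝ), y ^ (d - 1) • (Iio ρ).indicator (fun r => r ^ n) y =
      ρ ^ (d + n) / (d + n) := by
    have : ∀ y : ℝ, y ^ (d - 1) • (Iio ρ).indicator (fun r => r ^ n) y =
        (Iio ρ).indicator (fun r => r ^ (d - 1 + n)) y := by
      intro y
      by_cases hy : y ∈ Iio ρ <;> simp [hy, pow_add]
    simp_rw [this]
    rw [setIntegral_indicator measurableSet_Iio, Ioi_inter_Iio, ← integral_Ioc_eq_integral_Ioo,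
      ← intervalIntegral.integral_of_le hρ, integral_pow]
    have hexp : d - 1 + n + 1 = d + n := by omega
    rw [hexp, zero_pow (by omega), sub_zero]
    congr 1
    exact_mod_cast hexp
  rw [hradial, integral_fun_norm_addHaar, hshell, nsmul_eq_mul, smul_eq_mul]
  ring

end NormMoment

section Isometry

variable {E : Type*} [NormedAddCommGroup E] [InnerProductSpace ℝ E] [FiniteDimensional ℝ E]
  [MeasurableSpace E] [BorelSpace E]

theorem setIntegral_ball_comp_linearIsometryEquiv (e : E ≃ₗᵢ[ℝ] E) (ρ : ℝ) (f : E → ℝ) :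
    ∫ x in ball 0 ρ, f (e x) = ∫ x in ball 0 ρ, f x := by
  have hpre : e ⁻¹' ball 0 ρ = ball 0 ρ := by
    ext x
    simp only [mem_preimage, mem_ball_zero_iff, LinearIsometryEquiv.norm_map]
  simpa only [hpre] using
    e.measurePreserving.setIntegral_preimage_emb e.toHomeomorph.measurableEmbedding f (ball 0 ρ)

theorem setIntegral_ball_eq_zero_of_odd {f : E → ℝ} (hf : ∀ x, f (-x) = -f x) (ρ : ℝ) :
    ∫ x in ball 0 ρ, f x = 0 := by
  have h := setIntegral_ball_comp_linearIsometryEquiv (LinearIsometryEquiv.neg ℝ) ρ f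
  simp only [LinearIsometryEquiv.coe_neg, hf, integral_neg] at h
  linarith

end Isometry

section Coordinates

variable {ι : Type*} [Fintype ι] [DecidableEq ι]

theorem setIntegral_ball_apply_mul_apply (ρ : ℝ) (j k : ι) :
    ∫ x in ball (0 : EuclideanSpace ℝ ι) ρ, x j * x k =
      if j = k then (∫ x in ball (0 : EuclideanSpace ℝ ι) ρ, ‖x‖ ^ 2) / Fintype.card ι
      else 0 := by
  split_ifs with hjk
  · subst hjk
    have hswap : ∀ i, ∫ x in ball (0 : EuclideanSpace ℝ ι) ρ, x i * x i =
        ∫ x in ball (0 : EuclideanSpace ℝ ι) ρ, x j * x j := by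
      intro i
      rw [← setIntegral_ball_comp_linearIsometryEquiv
        (LinearIsometryEquiv.piLpCongrLeft 2 ℝ ℝ (Equiv.swap i j))]
      simp [LinearIsometryEquiv.piLpCongrLeft_apply, Equiv.piCongrLeft']
    have hsum : ∫ x in ball (0 : EuclideanSpace ℝ ι) ρ, ‖x‖ ^ 2 =
        ∑ i, ∫ x in ball (0 : EuclideanSpace ℝ ι) ρ, x i * x i := by
      rw [← integral_finsetSum _ fun i _ => (by fun_prop : Continuous _).integrableOn_ball 0 ρ]
      congr 1 with x
      rw [EuclideanSpace.real_norm_sq_eq]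
      simp only [sq]
    have hcard : (Fintype.card ι : ℝ) ≠ 0 := by
      have : Nonempty ι := ⟨j⟩
      positivity
    rw [hsum, Finset.sum_congr rfl fun i _ => hswap i, Finset.sum_const, Finset.card_univ,
      nsmul_eq_mul]
    field_simp
  · have hflip := setIntegral_ball_comp_linearIsometryEquiv
      (LinearIsometryEquiv.piLpCongrRight 2 fun i =>
        if i = j then LinearIsometryEquiv.neg ℝ else LinearIsometryEquiv.refl ℝ ℝ) ρ
      fun x => x j * x k
    simp only [LinearIsometryEquiv.piLpCongrRight_apply, apply_ite, LinearIsometryEquiv.coe_neg,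
      LinearIsometryEquiv.coe_refl, ↓reduceIte, Ne.symm hjk, id_eq, neg_mul, integral_neg] at hflip
    linarith

theorem setIntegral_ball_dotProduct_mulVec (A : Matrix ι ι ℝ) (ρ : ℝ) :
    ∫ x in ball (0 : EuclideanSpace ℝ ι) ρ, ofLp x ⬝ᵥ (A *ᵥ ofLp x) =
      A.trace * ((∫ x in ball (0 : EuclideanSpace ℝ ι) ρ, ‖x‖ ^ 2) / Fintype.card ι) := by
  have hpoint : ∀ x : EuclideanSpace ℝ ι,
      ofLp x ⬝ᵥ (A *ᵥ ofLp x) = ∑ j, ∑ k, A j k * (x j * x k) := by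
    intro x
    simp only [dotProduct, mulVec, Finset.mul_sum]
    exact Finset.sum_congr rfl fun j _ => Finset.sum_congr rfl fun k _ => by ring
  calc ∫ x in ball (0 : EuclideanSpace ℝ ι) ρ, ofLp x ⬝ᵥ (A *ᵥ ofLp x)
      = ∑ j, ∑ k, A j k * ∫ x in ball (0 : EuclideanSpace ℝ ι) ρ, x j * x k := by
        simp_rw [hpoint]
        rw [integral_finsetSum _ fun j _ => (by fun_prop : Continuous _).integrableOn_ball 0 ρ]
        refine Finset.sum_congr rfl fun j _ => ?_
        rw [integral_finsetSum _ fun k _ => (by fun_prop : Continuous _).integrableOn_ball 0 ρ]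
        simp_rw [integral_const_mul]
    _ = _ := by
        simp [setIntegral_ball_apply_mul_apply, trace, Finset.sum_mul]

theorem norm_toEuclideanLin_sq (Z : Matrix ι ι ℝ) (x : EuclideanSpace ℝ ι) :
    ‖toEuclideanLin Z x‖ ^ 2 = ofLp x ⬝ᵥ ((Zᵀ * Z) *ᵥ ofLp x) := by
  rw [← real_inner_self_eq_norm_sq, EuclideanSpace.inner_eq_star_dotProduct, toLpLin_apply,
    ← mulVec_mulVec, dotProduct_mulVec, vecMul_transpose]
  simp

theorem setIntegral_ball_norm_toEuclideanLin_sub_sq (Z : Matrix ι ι ℝ) (t : EuclideanSpace ℝ ι)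
    (ρ : ℝ) :
    ∫ x in ball (0 : EuclideanSpace ℝ ι) ρ, ‖toEuclideanLin Z x - t‖ ^ 2 =
      volume.real (ball (0 : EuclideanSpace ℝ ι) ρ) * ‖t‖ ^ 2 +
        (Zᵀ * Z).trace * ((∫ x in ball (0 : EuclideanSpace ℝ ι) ρ, ‖x‖ ^ 2) / Fintype.card ι) := by
  have hZ : Continuous (toEuclideanLin Z) := LinearMap.continuous_of_finiteDimensional _
  have hlin : ∫ x in ball (0 : EuclideanSpace ℝ ι) ρ, inner ℝ (toEuclideanLin Z x) t = 0 :=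
    setIntegral_ball_eq_zero_of_odd (fun x => by simp only [map_neg, inner_neg_left]) ρ
  simp_rw [norm_sub_sq_real]
  rw [integral_add ((by fun_prop : Continuous _).integrableOn_ball 0 ρ)
      ((continuous_const).integrableOn_ball 0 ρ),
    integral_sub ((by fun_prop : Continuous _).integrableOn_ball 0 ρ)
      ((by fun_prop : Continuous _).integrableOn_ball 0 ρ),
    setIntegral_const, integral_const_mul, hlin]
  simp_rw [norm_toEuclideanLin_sq, setIntegral_ball_dotProduct_mulVec, smul_eq_mul]
  ring

end Coordinates

theorem volume_real_ball_fin_three (x : EuclideanSpace ℝ (Fin 3)) {r : ℝ} (hr : 0 ≤ r) :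
    volume.real (ball x r) = 4 * Real.pi * r ^ 3 / 3 := by
  rw [measureReal_def, EuclideanSpace.volume_ball_fin_three, ENNReal.toReal_mul,
    ENNReal.toReal_pow, ENNReal.toReal_ofReal hr, ENNReal.toReal_ofReal (by positivity)]
  ring

theorem frob_sq {n : ℕ} (A : Matrix (Fin n) (Fin n) ℝ) : frob A ^ 2 = (Aᵀ * A).trace :=
  Real.sq_sqrt (by simpa using (posSemidef_conjTranspose_mul_self A).trace_nonneg)

theorem trace_transpose_mul_self_mul_sub_of_orthogonal {n : Type*} [Fintype n] [DecidableEq n]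
    {R R' : Matrix n n ℝ} (hR : Rᵀ * R = 1) (hR' : R'ᵀ * R' = 1) (D : Matrix n n ℝ) :
    ((R * D - R')ᵀ * (R * D - R')).trace =
      (Dᵀ * D).trace + Fintype.card n - 2 * (Dᵀ * (Rᵀ * R')).trace := by
  have hcross : (R'ᵀ * (R * D)).trace = (Dᵀ * (Rᵀ * R')).trace := by
    rw [← trace_transpose]
    simp only [transpose_mul, transpose_transpose, Matrix.mul_assoc]
  have hexpand : (R * D - R')ᵀ * (R * D - R') =
      Dᵀ * (Rᵀ * R) * D - Dᵀ * (Rᵀ * R') - R'ᵀ * (R * D) + R'ᵀ * R' := by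
    simp only [transpose_sub, transpose_mul, sub_mul, mul_sub, Matrix.mul_assoc]
    abel
  rw [hexpand, hR, hR', Matrix.mul_one, trace_add, trace_sub, trace_sub, hcross, trace_one]
  ring

theorem mv_sub_mv (F G : Matrix (Fin 3) (Fin 3) ℝ) (h : EuclideanSpace ℝ (Fin 3)) :
    mv F h - mv G h = toEuclideanLin (F - G) h := by
  rw [toLpLin_apply, sub_mulVec, WithLp.toLp_sub]
  rfl

theorem grioli_integral_decomposition_general (F R D : Matrix (Fin 3) (Fin 3) ℝ)
    (hR : Rᵀ * R = 1) (hFRD : F = R * D)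
    (t' : EuclideanSpace ℝ (Fin 3)) (R' : Matrix (Fin 3) (Fin 3) ℝ)
    (hR' : R'ᵀ * R' = 1) (ρ : ℝ) (hρ : 0 < ρ) :
    ∫ h in Metric.ball (0 : EuclideanSpace ℝ (Fin 3)) ρ, ‖mv F h - mv R' h - t'‖ ^ 2
      = (4 * Real.pi * ρ ^ 3 / 3) * ‖t'‖ ^ 2 +
        (4 * Real.pi * ρ ^ 5 / 15) *
          (frob D ^ 2 + 3 - 2 * (Dᵀ * (Rᵀ * R')).trace) := by
  simp_rw [mv_sub_mv]
  rw [setIntegral_ball_norm_toEuclideanLin_sub_sq, setIntegral_ball_norm_pow volume 2 hρ.le,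
    finrank_euclideanSpace_fin, volume_real_ball_fin_three 0 hρ.le,
    volume_real_ball_fin_three 0 zero_le_one, hFRD, trace_transpose_mul_self_mul_sub_of_orthogonal hR hR',
    ← frob_sq]
  simp only [Fintype.card_fin, Nat.cast_ofNat]
  ring

theorem grioli_integral_decomposition (F R D : Matrix (Fin 3) (Fin 3) ℝ)
    (hF : IsUnit F.det) (hR : Rᵀ * R = 1) (hRdet : R.det = 1)
    (hD : D.PosDef) (hD2 : D * D = Fᵀ * F) (hFRD : F = R * D)
    (t' : EuclideanSpace ℝ (Fin 3)) (R' : Matrix (Fin 3) (Fin 3) ℝ)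
    (hR' : R'ᵀ * R' = 1) (hR'det : R'.det = 1) (ρ : ℝ) (hρ : 0 < ρ) :
    ∫ h in Metric.ball (0 : EuclideanSpace ℝ (Fin 3)) ρ, ‖mv F h - mv R' h - t'‖ ^ 2
      = (4 * Real.pi * ρ ^ 3 / 3) * ‖t'‖ ^ 2 +
        (4 * Real.pi * ρ ^ 5 / 15) *
          (frob D ^ 2 + 3 - 2 * (Dᵀ * (Rᵀ * R')).trace) :=
  grioli_integral_decomposition_general F R D hR hFRD t' R' hR' ρ hρ
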